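/- There exist automata S (deterministic) and P (nondeterministic) over a common event set such that q0_S is nondeterministically partially bisimilar to q0_P but S is not language controllable w.r.t. P. (Concretely: S has s1 →^c s2 →^{u1} s3; P has p1 →^c p2 →^{u1} p3 and p1 →^c p4 →^{u2} p5, where u1, u2 are uncontrollable and c is controllable.) -/
import Mathlib


namespace SCT

inductive Path {Q E : Type} (tr : Q → E → Q → Prop) : Q → List E → Q → Prop
  | nil (q : Q) : Path tr q [] q
  | cons {q q' q'' : Q} {a : E} {w : List E} :
      tr q a q' → Path tr q' w q'' → Path tr q (a :: w) q''

def CanDo {Q E : Type} (tr : Q → E → Q → Prop) (q : Q) (w : List E) : Prop :=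
  ∃ q', Path tr q w q'

def Lang {Q E : Type} (tr : Q → E → Q → Prop) (q0 : Q) : Set (List E) :=
  { w | CanDo tr q0 w }

/-- Language controllability of `K` w.r.t. `M`: `K·Σu ∩ M ⊆ K`. -/
def LangControllable {E : Type} (U : Set E) (K M : Set (List E)) : Prop :=
  ∀ w u, w ∈ K → u ∈ U → w ++ [u] ∈ M → w ++ [u] ∈ K

/-- Synchronous product transition relation. -/
def prodTr {Q1 Q2 E : Type} (t1 : Q1 → E → Q1 → Prop) (t2 : Q2 → E → Q2 → Prop) :
    Q1 × Q2 → E → Q1 × Q2 → Prop :=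
  fun p a p' => t1 p.1 a p'.1 ∧ t2 p.2 a p'.2

def Deterministic {Q E : Type} (tr : Q → E → Q → Prop) : Prop :=
  ∀ q a q' q'', tr q a q' → tr q a q'' → q' = q''

/-- Automata controllability of S w.r.t. P. -/
def AC {QS QP E : Type} (U : Set E) (tS : QS → E → QS → Prop) (s0 : QS)
    (tP : QP → E → QP → Prop) (p0 : QP) : Prop :=
  ∀ w u, u ∈ U → CanDo tP p0 (w ++ [u]) → CanDo tS s0 w → CanDo tS s0 (w ++ [u])

/-- FM-controllability of S w.r.t. P. -/
def FM {QS QP E : Type} (U : Set E) (tS : QS → E → QS → Prop) (s0 : QS)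
    (tP : QP → E → QP → Prop) (p0 : QP) : Prop :=
  ∀ w u q, u ∈ U → CanDo tP p0 (w ++ [u]) → Path tS s0 w q → ∃ q', tS q u q'

def Reach {Q E : Type} (tr : Q → E → Q → Prop) (q0 q : Q) : Prop :=
  ∃ w, Path tr q0 w q

/-- Σu-admissibility of S w.r.t. P (Kushi–Takai). -/
def KT {QS QP E : Type} (U : Set E) (tS : QS → E → QS → Prop) (s0 : QS)
    (tP : QP → E → QP → Prop) (p0 : QP) : Prop :=
  ∀ qS qP u, Reach (prodTr tS tP) (s0, p0) (qS, qP) → u ∈ U →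
    (∃ qP', tP qP u qP') → ∃ q', prodTr tS tP (qS, qP) u q'

/-- Control relation (for deterministic automata). -/
def ControlRel {QS QP E : Type} (U : Set E) (tS : QS → E → QS → Prop)
    (tP : QP → E → QP → Prop) (R : QS → QP → Prop) : Prop :=
  ∀ qS qP, R qS qP →
    (∀ a qS' qP', tS qS a qS' → tP qP a qP' → R qS' qP') ∧
    (∀ u, u ∈ U → (∃ qP', tP qP u qP') →
      (∃ qS', tS qS u qS') ∧ ∀ qS' qP', tS qS u qS' → tP qP u qP' → R qS' qP')

/-- Partial bisimulation (deterministic version). -/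
def PB {QS QP E : Type} (U : Set E) (tS : QS → E → QS → Prop)
    (tP : QP → E → QP → Prop) (R : QS → QP → Prop) : Prop :=
  ∀ qS qP, R qS qP →
    (∀ a, (∃ qS', tS qS a qS') →
      (∃ qP', tP qP a qP') ∧ ∀ qS' qP', tS qS a qS' → tP qP a qP' → R qS' qP') ∧
    (∀ u, u ∈ U → (∃ qP', tP qP u qP') →
      (∃ qS', tS qS u qS') ∧ ∀ qS' qP', tS qS u qS' → tP qP u qP' → R qS' qP')

/-- Nondeterministic partial bisimulation. -/
def NPB {QS QP E : Type} (U : Set E) (tS : QS → E → QS → Prop)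
    (tP : QP → E → QP → Prop) (R : QS → QP → Prop) : Prop :=
  ∀ qS qP, R qS qP →
    (∀ a qS', tS qS a qS' → ∃ qP', tP qP a qP' ∧ R qS' qP') ∧
    (∀ u qP', u ∈ U → tP qP u qP' → ∃ qS', tS qS u qS' ∧ R qS' qP')

/-- State controllability (via an embedding `f`); `Σc = Uᶜ`. -/
def SC {QS QP E : Type} (U : Set E) (tS : QS → E → QS → Prop) (s0 : QS)
    (tP : QP → E → QP → Prop) (p0 : QP) : Prop :=
  ∃ f : QS → QP, f s0 = p0 ∧
    (∀ q q' a, tS q a q' → tP (f q) a (f q')) ∧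
    (∀ q a, ¬ (∃ q', tS q a q') → (∃ p', tP (f q) a p') → a ∉ U)

/-- S is a subautomaton of P (both modelled over the same state type). -/
def Sub {Q E : Type} (tS tP : Q → E → Q → Prop) (s0 p0 : Q) : Prop :=
  (∀ q a q', tS q a q' → tP q a q') ∧ s0 = p0

/-- FM⊆-controllability of a subautomaton S w.r.t. P. -/
def FMsub {Q E : Type} (U : Set E) (tS : Q → E → Q → Prop) (s0 : Q)
    (tP : Q → E → Q → Prop) (p0 : Q) : Prop :=
  ∀ w u q q', u ∈ U → Path tP p0 w q → tP q u q' → Path tS s0 w q → tS q u q'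

/-- Nondeterministic state controllability (Zhou et al.). -/
def SCn {QS QP E : Type} (U : Set E) (tS : QS → E → QS → Prop) (s0 : QS)
    (tP : QP → E → QP → Prop) (p0 : QP) : Prop :=
  ∀ w u, w ∈ Lang tS s0 → u ∈ U → w ++ [u] ∈ Lang tP p0 →
    ∀ q, Path tS s0 w q → ∃ q', tS q u q'

def exTS : Fin 3 → Fin 3 → Fin 3 → Prop :=
  fun q a q' => (q = 0 ∧ a = 0 ∧ q' = 1) ∨ (q = 1 ∧ a = 1 ∧ q' = 2)

def exTP : Fin 5 → Fin 3 → Fin 5 → Prop :=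
  fun q a q' => (q = 0 ∧ a = 0 ∧ q' = 1) ∨ (q = 1 ∧ a = 1 ∧ q' = 2) ∨
    (q = 0 ∧ a = 0 ∧ q' = 3) ∨ (q = 3 ∧ a = 2 ∧ q' = 4)

def exR : Fin 3 → Fin 5 → Prop :=
  fun s p => (s = 0 ∧ p = 0) ∨ (s = 1 ∧ p = 1) ∨ (s = 2 ∧ p = 2)

theorem stmt14 : ∃ (QS QP E : Type) (U : Set E) (tS : QS → E → QS → Prop) (s0 : QS)
    (tP : QP → E → QP → Prop) (p0 : QP),
    Deterministic tS ∧
      (∃ R : QS → QP → Prop, NPB U tS tP R ∧ R s0 p0) ∧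
      ¬ LangControllable U (Lang tS s0) (Lang tP p0) := by
  refine ⟨Fin 3, Fin 5, Fin 3, {a | a ≠ 0}, exTS, 0, exTP, 0, ?_, ⟨exR, ?_, ?_⟩, ?_⟩
  · rintro q a q' q'' (⟨rfl, rfl, rfl⟩ | ⟨rfl, rfl, rfl⟩) h <;>
      rcases h with (⟨h1, h2, rfl⟩ | ⟨h1, h2, rfl⟩) <;> simp_all
  · rintro qS qP (⟨rfl, rfl⟩ | ⟨rfl, rfl⟩ | ⟨rfl, rfl⟩) <;> constructor
    · rintro a qS' (⟨_, rfl, rfl⟩ | ⟨h, _, _⟩)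
      · exact ⟨1, Or.inl ⟨rfl, rfl, rfl⟩, Or.inr (Or.inl ⟨rfl, rfl⟩)⟩
      · simp at h
    · rintro u qP' hu (⟨h, _, _⟩ | ⟨h, _, _⟩ | ⟨h, _, _⟩ | ⟨h, _, _⟩) <;> simp_all
    · rintro a qS' (⟨h, _, _⟩ | ⟨_, rfl, rfl⟩)
      · simp at h
      · exact ⟨2, Or.inr (Or.inl ⟨rfl, rfl, rfl⟩), Or.inr (Or.inr ⟨rfl, rfl⟩)⟩
    · rintro u qP' hu (⟨h, _, _⟩ | ⟨_, rfl, rfl⟩ | ⟨h, _, _⟩ | ⟨h, _, _⟩)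
      · simp at h
      · exact ⟨2, Or.inr ⟨rfl, rfl, rfl⟩, Or.inr (Or.inr ⟨rfl, rfl⟩)⟩
      · simp at h
      · simp at h
    · rintro a qS' (⟨h, _, _⟩ | ⟨h, _, _⟩) <;> simp_all
    · rintro u qP' hu (⟨h, _, _⟩ | ⟨h, _, _⟩ | ⟨h, _, _⟩ | ⟨h, _, _⟩) <;> simp_all
  · exact Or.inl ⟨rfl, rfl⟩
  · intro h
    have hw : ([0] : List (Fin 3)) ∈ Lang exTS 0 :=
      ⟨1, Path.cons (Or.inl ⟨rfl, rfl, rfl⟩) (Path.nil 1)⟩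
    have hm : ([0, 2] : List (Fin 3)) ∈ Lang exTP 0 :=
      ⟨4, Path.cons (Or.inr (Or.inr (Or.inl ⟨rfl, rfl, rfl⟩)))
        (Path.cons (Or.inr (Or.inr (Or.inr ⟨rfl, rfl, rfl⟩))) (Path.nil 4))⟩
    have h2 : (2 : Fin 3) ∈ ({a : Fin 3 | a ≠ 0}) := by simp
    have := h [0] 2 hw h2 hm
    obtain ⟨q, hq⟩ := this
    rcases hq with _ | ⟨t1, hrest⟩
    rcases t1 with (⟨_, _, rfl⟩ | ⟨h1, _, _⟩)
    · rcases hrest with _ | ⟨t2, _⟩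
      rcases t2 with (⟨h1, _, _⟩ | ⟨_, h2, _⟩) <;> simp_all
    · simp at h1

end SCT
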